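/- arXiv:1810.10940 — 2 statements merged into one kernel-verified Lean document; each statement's English description precedes it below -/
import Mathlib

section
/- Let G be a subcubic graph containing the configuration Φ: eight vertices a,1,2,b,c,3,4,d inducing the graph with edges a-1, 1-2, 2-b, c-3, 3-4, 4-d, a-c, 1-3, 2-4, b-d (two parallel paths with three rungs plus end rungs), where vertices 1,2,3,4 have no neighbours outside Φ. Let G' be obtained from G by deleting 1,2,3,4 and adding edges a-b and c-d. Then α(G') = α(G) - 2. -/
/-- A set of vertices is independent if no two of its members are adjacent. -/
def IsIndepSet {V : Type*} (G : SimpleGraph V) (s : Set V) : Prop :=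
  s.Pairwise fun a b => ¬ G.Adj a b

/-- The independence number: the largest cardinality of an independent set. -/
noncomputable def indepNum {V : Type*} (G : SimpleGraph V) : ℕ :=
  sSup {n | ∃ s : Finset V, IsIndepSet G ↑s ∧ s.card = n}
/-- Adjacency of the configuration `Φ` on eight vertices, indexed
`0 = a, 1 = 1, 2 = 2, 3 = b, 4 = c, 5 = 3, 6 = 4, 7 = d`.
Edges: `a–1, 1–2, 2–b, c–3, 3–4, 4–d` (two parallel paths) and the rungs
`a–c, 1–3, 2–4, b–d`. -/
def phiAdj (i j : Fin 8) : Prop :=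
  ((i, j) ∈ ([(0,1),(1,2),(2,3),(4,5),(5,6),(6,7),(0,4),(1,5),(2,6),(3,7)] :
      List (Fin 8 × Fin 8))) ∨
  ((j, i) ∈ ([(0,1),(1,2),(2,3),(4,5),(5,6),(6,7),(0,4),(1,5),(2,6),(3,7)] :
      List (Fin 8 × Fin 8)))

instance phiAdj.dec : ∀ i j : Fin 8, Decidable (phiAdj i j) := fun i j => by
  unfold phiAdj; infer_instance

lemma indep_bdd {V : Type*} [Fintype V] (G : SimpleGraph V) :
    BddAbove {n | ∃ s : Finset V, IsIndepSet G ↑s ∧ s.card = n} := by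
  refine ⟨Fintype.card V, ?_⟩
  rintro n ⟨s, -, rfl⟩
  exact le_trans (Finset.card_le_univ s) (le_of_eq Finset.card_univ)

lemma card_le_indepNum {V : Type*} [Fintype V] {G : SimpleGraph V} {s : Finset V}
    (h : IsIndepSet G ↑s) : s.card ≤ indepNum G :=
  le_csSup (indep_bdd G) ⟨s, h, rfl⟩

lemma exists_indep_max {V : Type*} [Fintype V] (G : SimpleGraph V) :
    ∃ s : Finset V, IsIndepSet G ↑s ∧ s.card = indepNum G := by
  have h0 : (0:ℕ) ∈ {n | ∃ s : Finset V, IsIndepSet G ↑s ∧ s.card = n} :=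
    ⟨∅, by simp [IsIndepSet], by simp⟩
  exact Nat.sSup_mem ⟨0, h0⟩ (indep_bdd G)


/-- Φ-reduction: deleting the four inner vertices `1,2,3,4` (indices `1,2,5,6`) of an
induced `Φ` whose inner vertices have no outside neighbours, and adding the edges
`a–b` and `c–d`, decreases the independence number by exactly 2. -/
theorem phi_reduction {V : Type*} [Fintype V] (G : SimpleGraph V)
    [DecidableRel G.Adj] (hdeg : ∀ v, G.degree v ≤ 3)
    (f : Fin 8 → V) (hf : Function.Injective f)
    (hind : ∀ i j, G.Adj (f i) (f j) ↔ phiAdj i j)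
    (hout : ∀ i : Fin 8, i ∈ ({1, 2, 5, 6} : Set (Fin 8)) →
      ∀ v, G.Adj (f i) v → ∃ j, v = f j) :
    indepNum (SimpleGraph.fromRel
      (fun a b : {v : V // v ≠ f 1 ∧ v ≠ f 2 ∧ v ≠ f 5 ∧ v ≠ f 6} =>
        G.Adj a.1 b.1 ∨ (a.1 = f 0 ∧ b.1 = f 3) ∨ (a.1 = f 4 ∧ b.1 = f 7)))
    = indepNum G - 2 := by
  classical
  set G' : SimpleGraph {v : V // v ≠ f 1 ∧ v ≠ f 2 ∧ v ≠ f 5 ∧ v ≠ f 6} :=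
    SimpleGraph.fromRel
      (fun a b => G.Adj a.1 b.1 ∨ (a.1 = f 0 ∧ b.1 = f 3) ∨ (a.1 = f 4 ∧ b.1 = f 7))
    with hG'
  have fne : ∀ {i j : Fin 8}, i ≠ j → f i ≠ f j := fun h hh => h (hf hh)
  have hadj : ∀ i j : Fin 8, phiAdj i j → G.Adj (f i) (f j) := fun i j h => (hind i j).mpr h
  have hG'adj : ∀ x y, G'.Adj x y ↔ x ≠ y ∧
      ((G.Adj x.1 y.1 ∨ (x.1 = f 0 ∧ y.1 = f 3) ∨ (x.1 = f 4 ∧ y.1 = f 7)) ∨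
       (G.Adj y.1 x.1 ∨ (y.1 = f 0 ∧ x.1 = f 3) ∨ (y.1 = f 4 ∧ x.1 = f 7))) := by
    intro x y
    rw [hG', SimpleGraph.fromRel_adj]
  -- Direction 1 : indepNum G' + 2 ≤ indepNum G
  have dir1 : indepNum G' + 2 ≤ indepNum G := by
    obtain ⟨s', hs', hc'⟩ := exists_indep_max G'
    set u : Finset V := s'.image Subtype.val with hu
    have hucard : u.card = s'.card := Finset.card_image_of_injective _ Subtype.val_injective
    have memu : ∀ {v}, v ∈ u → v ≠ f 1 ∧ v ≠ f 2 ∧ v ≠ f 5 ∧ v ≠ f 6 := by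
      intro v hv
      obtain ⟨x, hx, rfl⟩ := Finset.mem_image.mp hv
      exact x.2
    have hu_ind : IsIndepSet G ↑u := by
      intro x hx y hy hne hA
      obtain ⟨x', hx', rfl⟩ := Finset.mem_image.mp hx
      obtain ⟨y', hy', rfl⟩ := Finset.mem_image.mp hy
      have hne' : x' ≠ y' := fun h => hne (congrArg Subtype.val h)
      exact hs' hx' hy' hne' ((hG'adj x' y').mpr ⟨hne', Or.inl (Or.inl hA)⟩)
    have nbu : ∀ i j : Fin 8, phiAdj i j → ¬(f i ∈ u ∧ f j ∈ u) := by
      rintro i j hij ⟨hi, hj⟩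
      exact hu_ind hi hj (hadj i j hij).ne (hadj i j hij)
    have nbu03 : ¬(f 0 ∈ u ∧ f 3 ∈ u) := by
      rintro ⟨h0, h3⟩
      obtain ⟨x', hx', hx0⟩ := Finset.mem_image.mp h0
      obtain ⟨y', hy', hy3⟩ := Finset.mem_image.mp h3
      have hne' : x' ≠ y' := by
        intro h; rw [h, hy3] at hx0; exact fne (by decide : (3:Fin 8) ≠ 0) hx0
      exact hs' hx' hy' hne' ((hG'adj x' y').mpr ⟨hne', Or.inl (Or.inr (Or.inl ⟨hx0, hy3⟩))⟩)
    have nbu47 : ¬(f 4 ∈ u ∧ f 7 ∈ u) := by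
      rintro ⟨h0, h3⟩
      obtain ⟨x', hx', hx0⟩ := Finset.mem_image.mp h0
      obtain ⟨y', hy', hy3⟩ := Finset.mem_image.mp h3
      have hne' : x' ≠ y' := by
        intro h; rw [h, hy3] at hx0; exact fne (by decide : (7:Fin 8) ≠ 4) hx0
      exact hs' hx' hy' hne' ((hG'adj x' y').mpr ⟨hne', Or.inl (Or.inr (Or.inr ⟨hx0, hy3⟩))⟩)
    have inner_notin : ∀ i : Fin 8, i ∈ ({1,2,5,6} : Set (Fin 8)) → f i ∉ u := by
      intro i hi hmem
      have h4 := memu hmem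
      simp only [Set.mem_insert_iff, Set.mem_singleton_iff] at hi
      rcases hi with rfl | rfl | rfl | rfl
      · exact h4.1 rfl
      · exact h4.2.1 rfl
      · exact h4.2.2.1 rfl
      · exact h4.2.2.2 rfl
    -- extension lemma
    have extend : ∀ i j : Fin 8, i ∈ ({1,2,5,6} : Set (Fin 8)) → j ∈ ({1,2,5,6} : Set (Fin 8)) →
        ¬ phiAdj i j → i ≠ j →
        (∀ k, phiAdj i k → f k ∉ u) → (∀ k, phiAdj j k → f k ∉ u) →
        indepNum G' + 2 ≤ indepNum G := by
      intro i j hi hj hnadj hij hni hnj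
      have hfij : f i ≠ f j := fne hij
      have hiu : f i ∉ u := inner_notin i hi
      have hju : f j ∉ u := inner_notin j hj
      have hnadj' : ¬ phiAdj j i := fun h => hnadj (Or.elim h Or.inr Or.inl)
      have noadj_i : ∀ x ∈ u, ¬ G.Adj (f i) x := by
        intro x hx hA
        obtain ⟨k, rfl⟩ := hout i hi x hA
        exact hni k ((hind i k).mp hA) hx
      have noadj_j : ∀ x ∈ u, ¬ G.Adj (f j) x := by
        intro x hx hA
        obtain ⟨k, rfl⟩ := hout j hj x hA
        exact hnj k ((hind j k).mp hA) hx
      have hw_ind : IsIndepSet G ↑(insert (f i) (insert (f j) u)) := by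
        intro x hx y hy hne hA
        simp only [Finset.coe_insert, Set.mem_insert_iff, Finset.mem_coe] at hx hy
        rcases hx with rfl | rfl | hx
        · rcases hy with rfl | rfl | hy
          · exact hne rfl
          · exact hnadj ((hind i j).mp hA)
          · exact noadj_i y hy hA
        · rcases hy with rfl | rfl | hy
          · exact hnadj' ((hind j i).mp hA)
          · exact hne rfl
          · exact noadj_j y hy hA
        · rcases hy with rfl | rfl | hy
          · exact noadj_i x hx (hA.symm)
          · exact noadj_j x hx (hA.symm)
          · exact hu_ind hx hy hne hA
      have hwcard : (insert (f i) (insert (f j) u)).card = u.card + 2 := by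
        rw [Finset.card_insert_of_notMem, Finset.card_insert_of_notMem hju]
        simp only [Finset.mem_insert]
        push_neg
        exact ⟨hfij, hiu⟩
      have := card_le_indepNum hw_ind
      omega
    -- choose the pair
    by_cases h3u : f 3 ∈ u
    · -- use {1, 6} : f 0 ∉ u, f 7 ∉ u
      have h0u : f 0 ∉ u := fun h => nbu03 ⟨h, h3u⟩
      have h7u : f 7 ∉ u := fun h => nbu 3 7 (by decide) ⟨h3u, h⟩
      refine extend 1 6 (by simp) (by simp) (by decide) (by decide) ?_ ?_
      · intro k hk
        have := (by decide : ∀ k : Fin 8, phiAdj 1 k → k = 0 ∨ k = 2 ∨ k = 5) k hk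
        rcases this with rfl | rfl | rfl
        · exact h0u
        · exact inner_notin 2 (by simp)
        · exact inner_notin 5 (by simp)
      · intro k hk
        have := (by decide : ∀ k : Fin 8, phiAdj 6 k → k = 2 ∨ k = 5 ∨ k = 7) k hk
        rcases this with rfl | rfl | rfl
        · exact inner_notin 2 (by simp)
        · exact inner_notin 5 (by simp)
        · exact h7u
    · by_cases h4u : f 4 ∈ u
      · -- use {1, 6} : f 0 ∉ u (edge 0-4), f 7 ∉ u (extra edge c-d)
        have h0u : f 0 ∉ u := fun h => nbu 0 4 (by decide) ⟨h, h4u⟩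
        have h7u : f 7 ∉ u := fun h => nbu47 ⟨h4u, h⟩
        refine extend 1 6 (by simp) (by simp) (by decide) (by decide) ?_ ?_
        · intro k hk
          have := (by decide : ∀ k : Fin 8, phiAdj 1 k → k = 0 ∨ k = 2 ∨ k = 5) k hk
          rcases this with rfl | rfl | rfl
          · exact h0u
          · exact inner_notin 2 (by simp)
          · exact inner_notin 5 (by simp)
        · intro k hk
          have := (by decide : ∀ k : Fin 8, phiAdj 6 k → k = 2 ∨ k = 5 ∨ k = 7) k hk
          rcases this with rfl | rfl | rfl
          · exact inner_notin 2 (by simp)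
          · exact inner_notin 5 (by simp)
          · exact h7u
      · -- use {2, 5} (vertices f 2, f 5): neighbours f1,f3,f6 and f4,f6,f1
        refine extend 2 5 (by simp) (by simp) (by decide) (by decide) ?_ ?_
        · intro k hk
          have := (by decide : ∀ k : Fin 8, phiAdj 2 k → k = 1 ∨ k = 3 ∨ k = 6) k hk
          rcases this with rfl | rfl | rfl
          · exact inner_notin 1 (by simp)
          · exact h3u
          · exact inner_notin 6 (by simp)
        · intro k hk
          have := (by decide : ∀ k : Fin 8, phiAdj 5 k → k = 1 ∨ k = 4 ∨ k = 6) k hk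
          rcases this with rfl | rfl | rfl
          · exact inner_notin 1 (by simp)
          · exact h4u
          · exact inner_notin 6 (by simp)
  -- Direction 2 : indepNum G ≤ indepNum G' + 2
  have dir2 : indepNum G ≤ indepNum G' + 2 := by
    obtain ⟨s, hs, hcard⟩ := exists_indep_max G
    have nb : ∀ i j : Fin 8, phiAdj i j → f i ∈ s → f j ∉ s := by
      intro i j hij hi hj
      exact hs hi hj (hadj i j hij).ne (hadj i j hij)
    set E : Finset V := s.filter (fun v => (v = f 0 ∧ f 3 ∈ s) ∨ (v = f 4 ∧ f 7 ∈ s)) with hE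
    set X : Finset V := {f 1, f 2, f 5, f 6} ∪ E with hX
    set t : Finset V := s \ X with ht
    have htsub : t ⊆ s := Finset.sdiff_subset
    have hmemX : ∀ v : V, v ∈ X ↔ (v = f 1 ∨ v = f 2 ∨ v = f 5 ∨ v = f 6) ∨
        (v ∈ s ∧ ((v = f 0 ∧ f 3 ∈ s) ∨ (v = f 4 ∧ f 7 ∈ s))) := by
      intro v
      simp only [hX, hE, Finset.mem_union, Finset.mem_insert, Finset.mem_singleton,
        Finset.mem_filter]
    have ht_nin : ∀ v ∈ t, v ≠ f 1 ∧ v ≠ f 2 ∧ v ≠ f 5 ∧ v ≠ f 6 := by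
      intro v hv
      have hvX : v ∉ X := (Finset.mem_sdiff.mp hv).2
      refine ⟨?_, ?_, ?_, ?_⟩ <;> (rintro rfl; exact hvX ((hmemX _).mpr (by tauto)))
    have hP2 : ¬ (f 0 ∈ t ∧ f 3 ∈ t) := by
      rintro ⟨h0, h3⟩
      exact (Finset.mem_sdiff.mp h0).2
        ((hmemX _).mpr (Or.inr ⟨htsub h0, Or.inl ⟨rfl, htsub h3⟩⟩))
    have hP3 : ¬ (f 4 ∈ t ∧ f 7 ∈ t) := by
      rintro ⟨h4, h7⟩
      exact (Finset.mem_sdiff.mp h4).2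
        ((hmemX _).mpr (Or.inr ⟨htsub h4, Or.inr ⟨rfl, htsub h7⟩⟩))
    have pcard : ∀ a b : V, ({a, b} : Finset V).card ≤ 2 := fun a b =>
      le_trans (Finset.card_insert_le _ _) (by simp)
    have key : ∃ P : Finset V, (∀ v ∈ s, v ∈ X → v ∈ P) ∧ P.card ≤ 2 := by
      by_cases h1 : f 1 ∈ s
      · have h0 : f 0 ∉ s := fun h => nb 0 1 (by decide) h h1
        have h2 : f 2 ∉ s := nb 1 2 (by decide) h1
        have h5 : f 5 ∉ s := nb 1 5 (by decide) h1
        by_cases h6 : f 6 ∈ s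
        · have h7 : f 7 ∉ s := nb 6 7 (by decide) h6
          refine ⟨{f 1, f 6}, ?_, pcard _ _⟩
          intro v hv hvX
          rw [hmemX] at hvX
          simp only [Finset.mem_insert, Finset.mem_singleton]
          rcases hvX with (rfl | rfl | rfl | rfl) | ⟨hvs, (⟨rfl, h3'⟩ | ⟨rfl, h7'⟩)⟩
          · exact Or.inl rfl
          · exact absurd hv h2
          · exact absurd hv h5
          · exact Or.inr rfl
          · exact absurd hv h0
          · exact absurd h7' h7
        · refine ⟨{f 1, f 4}, ?_, pcard _ _⟩
          intro v hv hvX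
          rw [hmemX] at hvX
          simp only [Finset.mem_insert, Finset.mem_singleton]
          rcases hvX with (rfl | rfl | rfl | rfl) | ⟨hvs, (⟨rfl, h3'⟩ | ⟨rfl, h7'⟩)⟩
          · exact Or.inl rfl
          · exact absurd hv h2
          · exact absurd hv h5
          · exact absurd hv h6
          · exact absurd hv h0
          · exact Or.inr rfl
      · by_cases h2 : f 2 ∈ s
        · have h3 : f 3 ∉ s := nb 2 3 (by decide) h2
          have h6 : f 6 ∉ s := nb 2 6 (by decide) h2
          by_cases h5 : f 5 ∈ s
          · have h4 : f 4 ∉ s := fun h => nb 4 5 (by decide) h h5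
            refine ⟨{f 2, f 5}, ?_, pcard _ _⟩
            intro v hv hvX
            rw [hmemX] at hvX
            simp only [Finset.mem_insert, Finset.mem_singleton]
            rcases hvX with (rfl | rfl | rfl | rfl) | ⟨hvs, (⟨rfl, h3'⟩ | ⟨rfl, h7'⟩)⟩
            · exact absurd hv h1
            · exact Or.inl rfl
            · exact Or.inr rfl
            · exact absurd hv h6
            · exact absurd h3' h3
            · exact absurd hv h4
          · refine ⟨{f 2, f 4}, ?_, pcard _ _⟩
            intro v hv hvX
            rw [hmemX] at hvX
            simp only [Finset.mem_insert, Finset.mem_singleton]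
            rcases hvX with (rfl | rfl | rfl | rfl) | ⟨hvs, (⟨rfl, h3'⟩ | ⟨rfl, h7'⟩)⟩
            · exact absurd hv h1
            · exact Or.inl rfl
            · exact absurd hv h5
            · exact absurd hv h6
            · exact absurd h3' h3
            · exact Or.inr rfl
        · by_cases h5 : f 5 ∈ s
          · have h4 : f 4 ∉ s := fun h => nb 4 5 (by decide) h h5
            have h6 : f 6 ∉ s := nb 5 6 (by decide) h5
            refine ⟨{f 5, f 0}, ?_, pcard _ _⟩
            intro v hv hvX
            rw [hmemX] at hvX
            simp only [Finset.mem_insert, Finset.mem_singleton]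
            rcases hvX with (rfl | rfl | rfl | rfl) | ⟨hvs, (⟨rfl, h3'⟩ | ⟨rfl, h7'⟩)⟩
            · exact absurd hv h1
            · exact absurd hv h2
            · exact Or.inl rfl
            · exact absurd hv h6
            · exact Or.inr rfl
            · exact absurd hv h4
          · by_cases h6 : f 6 ∈ s
            · have h7 : f 7 ∉ s := nb 6 7 (by decide) h6
              refine ⟨{f 6, f 0}, ?_, pcard _ _⟩
              intro v hv hvX
              rw [hmemX] at hvX
              simp only [Finset.mem_insert, Finset.mem_singleton]
              rcases hvX with (rfl | rfl | rfl | rfl) | ⟨hvs, (⟨rfl, h3'⟩ | ⟨rfl, h7'⟩)⟩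
              · exact absurd hv h1
              · exact absurd hv h2
              · exact absurd hv h5
              · exact Or.inl rfl
              · exact Or.inr rfl
              · exact absurd h7' h7
            · refine ⟨{f 0, f 4}, ?_, pcard _ _⟩
              intro v hv hvX
              rw [hmemX] at hvX
              simp only [Finset.mem_insert, Finset.mem_singleton]
              rcases hvX with (rfl | rfl | rfl | rfl) | ⟨hvs, (⟨rfl, h3'⟩ | ⟨rfl, h7'⟩)⟩
              · exact absurd hv h1
              · exact absurd hv h2
              · exact absurd hv h5
              · exact absurd hv h6
              · exact Or.inl rfl
              · exact Or.inr rfl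
    obtain ⟨P, hP, hPc⟩ := key
    have hsub : s ⊆ t ∪ P := by
      intro v hv
      by_cases hvX : v ∈ X
      · exact Finset.mem_union_right _ (hP v hv hvX)
      · exact Finset.mem_union_left _ (Finset.mem_sdiff.mpr ⟨hv, hvX⟩)
    have hcle : s.card ≤ t.card + 2 := by
      calc s.card ≤ (t ∪ P).card := Finset.card_le_card hsub
        _ ≤ t.card + P.card := Finset.card_union_le _ _
        _ ≤ t.card + 2 := by omega
    set t' : Finset {v : V // v ≠ f 1 ∧ v ≠ f 2 ∧ v ≠ f 5 ∧ v ≠ f 6} :=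
      t.subtype _ with ht'
    have ht'card : t'.card = t.card := by
      rw [ht', Finset.card_subtype, Finset.filter_true_of_mem ht_nin]
    have ht'_ind : IsIndepSet G' ↑t' := by
      intro x hx y hy hne hA
      have hxt : (x : V) ∈ t := by
        have := Finset.mem_coe.mp hx; rwa [ht', Finset.mem_subtype] at this
      have hyt : (y : V) ∈ t := by
        have := Finset.mem_coe.mp hy; rwa [ht', Finset.mem_subtype] at this
      have hvne : (x : V) ≠ (y : V) := fun h => hne (Subtype.ext h)
      obtain ⟨-, h⟩ := (hG'adj x y).mp hA
      rcases h with (hA' | ⟨e0, e3⟩ | ⟨e4, e7⟩) | (hA' | ⟨e0, e3⟩ | ⟨e4, e7⟩)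
      · exact hs (htsub hxt) (htsub hyt) hvne hA'
      · exact hP2 ⟨e0 ▸ hxt, e3 ▸ hyt⟩
      · exact hP3 ⟨e4 ▸ hxt, e7 ▸ hyt⟩
      · exact hs (htsub hyt) (htsub hxt) hvne.symm hA'
      · exact hP2 ⟨e0 ▸ hyt, e3 ▸ hxt⟩
      · exact hP3 ⟨e4 ▸ hyt, e7 ▸ hxt⟩
    have hfin := card_le_indepNum ht'_ind
    omega
  omega
end

section
/- Let G be a subcubic graph containing the configuration Γ: vertices a,1,2,b,e and c,3,4,d,f with edges a-1, 1-2, 2-b, b-e, c-3, 3-4, 4-d, a-c, 1-4, 2-3, e-d, and optionally a vertex f adjacent to both b and d; vertices 1,2,3,4 have no other neighbours. Let G' be obtained from G by deleting 1,2,3,4 and adding edges a-b and c-d. Then α(G') = α(G) - 2. -/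
/-- Adjacency of the configuration `Γ` on nine vertices, indexed
`0 = a, 1 = 1, 2 = 2, 3 = b, 4 = e, 5 = c, 6 = 3, 7 = 4, 8 = d`.
Edges: `a–1, 1–2, 2–b, b–e` on top, `c–3, 3–4, 4–d` on the bottom, the vertical
edge `a–c`, the crossing edges `1–4` and `2–3`, and `e–d`. -/
def gammaAdj (i j : Fin 9) : Prop :=
  ((i, j) ∈ ([(0,1),(1,2),(2,3),(3,4),(5,6),(6,7),(7,8),(0,5),(1,7),(2,6),(4,8)] :
      List (Fin 9 × Fin 9))) ∨
  ((j, i) ∈ ([(0,1),(1,2),(2,3),(3,4),(5,6),(6,7),(7,8),(0,5),(1,7),(2,6),(4,8)] :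
      List (Fin 9 × Fin 9)))

/-!
An independent set of the reduced graph misses `1, 2, 3, 4` and contains neither both `a, b` nor
both `c, d`. If it misses `a` and `c` it extends by `1` and `3`; if it misses `b` and `d` it extends
by `2` and `4`. Otherwise it contains `a, d` or `c, b`, and since every neighbour of `b` other than
`2` is adjacent to `d` (and symmetrically), `a` can first be exchanged for `b` (or `c` for `d`).
Conversely, an independent set of `G` contains neither `1` nor `2` when it contains `a` and `b`,
and neither `3` nor `4` when it contains `c` and `d`. Deleting `a, 3, 4`, resp. `c, 1, 2`,
resp. `1, 2, 3, 4` yields an independent set of the reduced graph, and costs at most two vertices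
since the deleted vertices are covered by two cliques.
-/

open Finset Function

instance : DecidableRel gammaAdj := fun i j => by unfold gammaAdj; infer_instance

lemma indepNum_eq_indepNum {V : Type*} (G : SimpleGraph V) : indepNum G = G.indepNum := by
  simp only [indepNum, SimpleGraph.indepNum, SimpleGraph.isNIndepSet_iff, IsIndepSet]

namespace SimpleGraph

variable {V : Type*} [DecidableEq V] {G : SimpleGraph V} {s : Finset V}

lemma IsIndepSet.insert_of_forall_adj_notMem {v : V} (hs : G.IsIndepSet s)
    (hv : ∀ x, G.Adj v x → x ∉ s) : G.IsIndepSet ↑(insert v s) := by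
  rw [coe_insert]
  exact hs.insert fun x hx _ => ⟨fun h => hv x h hx, fun h => hv x h.symm hx⟩

lemma IsIndepSet.card_inter_le_one {k : Finset V} (hs : G.IsIndepSet s) (hk : G.IsClique k) :
    #(s ∩ k) ≤ 1 :=
  card_le_one.2 fun x hx y hy => by
    rw [mem_inter] at hx hy
    by_contra hxy
    exact hs hx.1 hy.1 hxy (hk hx.2 hy.2 hxy)

lemma IsIndepSet.card_le_card_sdiff_add_two {k₁ k₂ : Finset V} (hs : G.IsIndepSet s)
    (h₁ : G.IsClique k₁) (h₂ : G.IsClique k₂) : #s ≤ #(s \ (k₁ ∪ k₂)) + 2 :=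
  calc #s = #(s \ (k₁ ∪ k₂)) + #(s ∩ k₁ ∪ s ∩ k₂) := by
        rw [← inter_union_distrib_left, card_sdiff_add_card_inter]
    _ ≤ #(s \ (k₁ ∪ k₂)) + (#(s ∩ k₁) + #(s ∩ k₂)) := by grw [card_union_le]
    _ ≤ #(s \ (k₁ ∪ k₂)) + 2 := by
        grw [hs.card_inter_le_one h₁, hs.card_inter_le_one h₂]

end SimpleGraph

section

variable {V : Type*} {G : SimpleGraph V} {w : Fin 9 → V} {s : Finset V}

structure IsInducedGamma (G : SimpleGraph V) (w : Fin 9 → V) : Prop where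
  injective : Injective w
  adj_iff : ∀ i j, G.Adj (w i) (w j) ↔ gammaAdj i j

structure IsGammaConfiguration (G : SimpleGraph V) (w : Fin 9 → V) : Prop
    extends IsInducedGamma G w where
  exists_eq_of_adj_inner :
    ∀ i ∈ ({1, 2, 6, 7} : Set (Fin 9)), ∀ v, G.Adj (w i) v → ∃ j, v = w j
  adj_b_iff_adj_d : ∀ v, (∀ i, v ≠ w i) → (G.Adj (w 3) v ↔ G.Adj (w 8) v)

def gammaReduction (G : SimpleGraph V) (w : Fin 9 → V) :
    SimpleGraph {v : V // v ≠ w 1 ∧ v ≠ w 2 ∧ v ≠ w 6 ∧ v ≠ w 7} :=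
  SimpleGraph.fromRel fun a b =>
    G.Adj a.1 b.1 ∨ (a.1 = w 0 ∧ b.1 = w 3) ∨ (a.1 = w 5 ∧ b.1 = w 8)

/-- The independent sets of `gammaReduction G w`, seen as sets of vertices of `G`. -/
structure IsReducedIndepSet (G : SimpleGraph V) (w : Fin 9 → V) (s : Finset V) : Prop where
  isIndepSet : G.IsIndepSet s
  notMem_inner : w 1 ∉ s ∧ w 2 ∉ s ∧ w 6 ∉ s ∧ w 7 ∉ s
  not_a_b : ¬(w 0 ∈ s ∧ w 3 ∈ s)
  not_c_d : ¬(w 5 ∈ s ∧ w 8 ∈ s)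

lemma gammaReduction_adj {a b : {v : V // v ≠ w 1 ∧ v ≠ w 2 ∧ v ≠ w 6 ∧ v ≠ w 7}} :
    (gammaReduction G w).Adj a b ↔ a ≠ b ∧
      ((G.Adj a.1 b.1 ∨ (a.1 = w 0 ∧ b.1 = w 3) ∨ (a.1 = w 5 ∧ b.1 = w 8)) ∨
        (G.Adj b.1 a.1 ∨ (b.1 = w 0 ∧ a.1 = w 3) ∨ (b.1 = w 5 ∧ a.1 = w 8))) :=
  SimpleGraph.fromRel_adj _ _ _

lemma isIndepSet_gammaReduction_iff (hw : Injective w)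
    {s : Finset {v : V // v ≠ w 1 ∧ v ≠ w 2 ∧ v ≠ w 6 ∧ v ≠ w 7}} :
    (gammaReduction G w).IsIndepSet s ↔ IsReducedIndepSet G w (s.map (Embedding.subtype _)) := by
  have hmem : ∀ {v}, v ∈ s.map (Embedding.subtype _) ↔ ∃ h, ⟨v, h⟩ ∈ s := by simp
  constructor
  · intro h
    have hr : ∀ a ∈ s, ∀ b ∈ s, a.1 ≠ b.1 →
        ¬(G.Adj a.1 b.1 ∨ (a.1 = w 0 ∧ b.1 = w 3) ∨ (a.1 = w 5 ∧ b.1 = w 8)) :=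
      fun a ha b hb hab hr =>
        h ha hb (ne_of_apply_ne _ hab) (gammaReduction_adj.2 ⟨ne_of_apply_ne _ hab, Or.inl hr⟩)
    refine ⟨?_, ?_, ?_, ?_⟩
    · simp only [SimpleGraph.IsIndepSet, coe_map, Set.Pairwise, Set.forall_mem_image, mem_coe]
      exact fun a ha b hb hab hadj => hr a ha b hb hab (Or.inl hadj)
    · simp only [hmem]
      refine ⟨?_, ?_, ?_, ?_⟩ <;> rintro ⟨h, -⟩ <;> simp at h
    · simp only [hmem]
      rintro ⟨⟨_, ha⟩, ⟨_, hb⟩⟩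
      exact hr _ ha _ hb (hw.ne (by decide)) (Or.inr (Or.inl ⟨rfl, rfl⟩))
    · simp only [hmem]
      rintro ⟨⟨_, ha⟩, ⟨_, hb⟩⟩
      exact hr _ ha _ hb (hw.ne (by decide)) (Or.inr (Or.inr ⟨rfl, rfl⟩))
  · rintro ⟨hs, -, hab, hcd⟩ a ha b hb - hadj
    obtain ⟨hne, hadj⟩ := gammaReduction_adj.1 hadj
    have hma := mem_map_of_mem (Embedding.subtype _) ha
    have hmb := mem_map_of_mem (Embedding.subtype _) hb
    simp only [Embedding.subtype_apply] at hma hmb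
    rcases hadj with (h | ⟨ea, eb⟩ | ⟨ea, eb⟩) | (h | ⟨ea, eb⟩ | ⟨ea, eb⟩)
    · exact hs hma hmb (Subtype.val_injective.ne hne) h
    · exact hab ⟨ea ▸ hma, eb ▸ hmb⟩
    · exact hcd ⟨ea ▸ hma, eb ▸ hmb⟩
    · exact hs hmb hma (Subtype.val_injective.ne hne.symm) h
    · exact hab ⟨ea ▸ hmb, eb ▸ hma⟩
    · exact hcd ⟨ea ▸ hmb, eb ▸ hma⟩

lemma IsReducedIndepSet.card_le_indepNum [Finite V] (hw : Injective w)
    (hs : IsReducedIndepSet G w s) : #s ≤ (gammaReduction G w).indepNum := by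
  classical
  obtain ⟨h1, h2, h6, h7⟩ := hs.notMem_inner
  have hmem : ∀ v ∈ s, v ≠ w 1 ∧ v ≠ w 2 ∧ v ≠ w 6 ∧ v ≠ w 7 := fun v hv =>
    ⟨ne_of_mem_of_not_mem hv h1, ne_of_mem_of_not_mem hv h2, ne_of_mem_of_not_mem hv h6,
      ne_of_mem_of_not_mem hv h7⟩
  rw [← subtype_map_of_mem hmem, ← isIndepSet_gammaReduction_iff hw] at hs
  rw [← subtype_map_of_mem hmem, card_map]
  exact hs.card_le_indepNum

lemma exists_isReducedIndepSet_card_eq_indepNum (hw : Injective w) :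
    ∃ s, IsReducedIndepSet G w s ∧ #s = (gammaReduction G w).indepNum := by
  obtain ⟨s, hs⟩ := (gammaReduction G w).exists_isNIndepSet_indepNum
  exact ⟨_, (isIndepSet_gammaReduction_iff hw).1 hs.isIndepSet, by rw [card_map, hs.card_eq]⟩

namespace IsInducedGamma

lemma notMem_of_gammaAdj (hΓ : IsInducedGamma G w) (hs : G.IsIndepSet s) {i j : Fin 9}
    (hij : gammaAdj i j) (hi : w i ∈ s) : w j ∉ s := fun hj =>
  have hadj := (hΓ.adj_iff i j).2 hij
  hs hi hj (G.ne_of_adj hadj) hadj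

variable [DecidableEq V]

lemma isClique_pair (hΓ : IsInducedGamma G w) {i j : Fin 9} (hij : gammaAdj i j) :
    G.IsClique ↑({w i, w j} : Finset V) := by
  rw [coe_pair]
  exact SimpleGraph.isClique_pair.2 fun _ => (hΓ.adj_iff i j).2 hij

theorem exists_isReducedIndepSet_card_add_two_ge (hΓ : IsInducedGamma G w)
    (hs : G.IsIndepSet s) : ∃ t, IsReducedIndepSet G w t ∧ #s ≤ #t + 2 := by
  have notMem := fun {i j : Fin 9} (hij : gammaAdj i j) => hΓ.notMem_of_gammaAdj hs hij
  have hsub : ∀ k : Finset V, G.IsIndepSet ↑(s \ k) := fun k =>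
    hs.mono (coe_subset.2 sdiff_subset)
  by_cases hab : w 0 ∈ s ∧ w 3 ∈ s
  · have h1 := notMem (by decide : gammaAdj 0 1) hab.1
    have h2 := notMem (by decide : gammaAdj 3 2) hab.2
    have h5 := notMem (by decide : gammaAdj 0 5) hab.1
    refine ⟨s \ ({w 0} ∪ {w 6, w 7}), ⟨hsub _, ?_, ?_, ?_⟩,
      hs.card_le_card_sdiff_add_two (by simp) (hΓ.isClique_pair (by decide))⟩ <;>
      simp [hΓ.injective.eq_iff, h1, h2, h5]
  by_cases hcd : w 5 ∈ s ∧ w 8 ∈ s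
  · have h6 := notMem (by decide : gammaAdj 5 6) hcd.1
    have h7 := notMem (by decide : gammaAdj 8 7) hcd.2
    have h0 := notMem (by decide : gammaAdj 5 0) hcd.1
    refine ⟨s \ ({w 5} ∪ {w 1, w 2}), ⟨hsub _, ?_, ?_, ?_⟩,
      hs.card_le_card_sdiff_add_two (by simp) (hΓ.isClique_pair (by decide))⟩ <;>
      simp [hΓ.injective.eq_iff, h6, h7, h0]
  refine ⟨s \ ({w 1, w 2} ∪ {w 6, w 7}), ⟨hsub _, ?_, ?_, ?_⟩,
    hs.card_le_card_sdiff_add_two (hΓ.isClique_pair (by decide)) (hΓ.isClique_pair (by decide))⟩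
  · simp [hΓ.injective.eq_iff]
  · exact fun h => hab ⟨(mem_sdiff.1 h.1).1, (mem_sdiff.1 h.2).1⟩
  · exact fun h => hcd ⟨(mem_sdiff.1 h.1).1, (mem_sdiff.1 h.2).1⟩

end IsInducedGamma

namespace IsGammaConfiguration

lemma eq_or_adj_d_of_adj_b (hΓ : IsGammaConfiguration G w) {x : V} (hx : G.Adj (w 3) x) :
    x = w 2 ∨ G.Adj (w 8) x := by
  by_cases hxw : ∃ j, x = w j
  · obtain ⟨j, rfl⟩ := hxw
    have h3j := (hΓ.adj_iff 3 j).1 hx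
    fin_cases j <;> simp_all [gammaAdj, hΓ.adj_iff]
  · push Not at hxw
    exact Or.inr ((hΓ.adj_b_iff_adj_d x hxw).1 hx)

lemma eq_or_adj_b_of_adj_d (hΓ : IsGammaConfiguration G w) {x : V} (hx : G.Adj (w 8) x) :
    x = w 7 ∨ G.Adj (w 3) x := by
  by_cases hxw : ∃ j, x = w j
  · obtain ⟨j, rfl⟩ := hxw
    have h8j := (hΓ.adj_iff 8 j).1 hx
    fin_cases j <;> simp_all [gammaAdj, hΓ.adj_iff]
  · push Not at hxw
    exact Or.inr ((hΓ.adj_b_iff_adj_d x hxw).2 hx)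

variable [DecidableEq V]

lemma insert_inner_isIndepSet (hΓ : IsGammaConfiguration G w) {i : Fin 9}
    (hi : i ∈ ({1, 2, 6, 7} : Set (Fin 9))) (hs : G.IsIndepSet s)
    (hnbr : ∀ j, gammaAdj i j → w j ∉ s) : G.IsIndepSet ↑(insert (w i) s) :=
  hs.insert_of_forall_adj_notMem fun x hx => by
    obtain ⟨j, rfl⟩ := hΓ.exists_eq_of_adj_inner i hi x hx
    exact hnbr j ((hΓ.adj_iff i j).1 hx)

lemma exists_isIndepSet_card_eq_add_two_of_notMem_a_c (hΓ : IsGammaConfiguration G w)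
    (hs : IsReducedIndepSet G w s) (h0 : w 0 ∉ s) (h5 : w 5 ∉ s) :
    ∃ t : Finset V, G.IsIndepSet ↑t ∧ #t = #s + 2 := by
  obtain ⟨hs, ⟨h1, h2, h6, h7⟩, -, -⟩ := hs
  have hs6 := hΓ.insert_inner_isIndepSet (i := 6) (by simp) hs fun j hj => by
    fin_cases j <;> simp_all [gammaAdj]
  refine ⟨insert (w 1) (insert (w 6) s), hΓ.insert_inner_isIndepSet (by simp) hs6 fun j hj => by
    fin_cases j <;> simp_all [gammaAdj, hΓ.injective.eq_iff], ?_⟩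
  rw [card_insert_of_notMem (by simp [hΓ.injective.eq_iff, h1]), card_insert_of_notMem h6]

lemma exists_isIndepSet_card_eq_add_two_of_notMem_b_d (hΓ : IsGammaConfiguration G w)
    (hs : IsReducedIndepSet G w s) (h3 : w 3 ∉ s) (h8 : w 8 ∉ s) :
    ∃ t : Finset V, G.IsIndepSet ↑t ∧ #t = #s + 2 := by
  obtain ⟨hs, ⟨h1, h2, h6, h7⟩, -, -⟩ := hs
  have hs7 := hΓ.insert_inner_isIndepSet (i := 7) (by simp) hs fun j hj => by
    fin_cases j <;> simp_all [gammaAdj]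
  refine ⟨insert (w 2) (insert (w 7) s), hΓ.insert_inner_isIndepSet (by simp) hs7 fun j hj => by
    fin_cases j <;> simp_all [gammaAdj, hΓ.injective.eq_iff], ?_⟩
  rw [card_insert_of_notMem (by simp [hΓ.injective.eq_iff, h2]), card_insert_of_notMem h7]

lemma exists_exchange_a_for_b (hΓ : IsGammaConfiguration G w) (hs : IsReducedIndepSet G w s)
    (h0 : w 0 ∈ s) (h8 : w 8 ∈ s) :
    ∃ t, IsReducedIndepSet G w t ∧ #t = #s ∧ w 0 ∉ t ∧ w 5 ∉ t := by
  obtain ⟨hs, ⟨h1, h2, h6, h7⟩, hab, -⟩ := hs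
  have h3 : w 3 ∉ s := fun h3 => hab ⟨h0, h3⟩
  have h5 := hΓ.notMem_of_gammaAdj hs (by decide : gammaAdj 0 5) h0
  have ht : G.IsIndepSet ↑(insert (w 3) (s.erase (w 0))) :=
    SimpleGraph.IsIndepSet.insert_of_forall_adj_notMem (hs.mono (coe_subset.2 (erase_subset _ _)))
      fun x hx hxs => by
        rcases hΓ.eq_or_adj_d_of_adj_b hx with rfl | h
        · exact h2 (mem_of_mem_erase hxs)
        · exact hs h8 (mem_of_mem_erase hxs) (G.ne_of_adj h) h
  refine ⟨insert (w 3) (s.erase (w 0)), ⟨ht, ?_, ?_, ?_⟩,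
    by rw [card_insert_of_notMem (by simp [h3]), card_erase_add_one h0], ?_, ?_⟩
  all_goals simp [hΓ.injective.eq_iff, *]

lemma exists_exchange_c_for_d (hΓ : IsGammaConfiguration G w) (hs : IsReducedIndepSet G w s)
    (h5 : w 5 ∈ s) (h3 : w 3 ∈ s) :
    ∃ t, IsReducedIndepSet G w t ∧ #t = #s ∧ w 0 ∉ t ∧ w 5 ∉ t := by
  obtain ⟨hs, ⟨h1, h2, h6, h7⟩, -, hcd⟩ := hs
  have h8 : w 8 ∉ s := fun h8 => hcd ⟨h5, h8⟩
  have h0 := hΓ.notMem_of_gammaAdj hs (by decide : gammaAdj 5 0) h5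
  have ht : G.IsIndepSet ↑(insert (w 8) (s.erase (w 5))) :=
    SimpleGraph.IsIndepSet.insert_of_forall_adj_notMem (hs.mono (coe_subset.2 (erase_subset _ _)))
      fun x hx hxs => by
        rcases hΓ.eq_or_adj_b_of_adj_d hx with rfl | h
        · exact h7 (mem_of_mem_erase hxs)
        · exact hs h3 (mem_of_mem_erase hxs) (G.ne_of_adj h) h
  refine ⟨insert (w 8) (s.erase (w 5)), ⟨ht, ?_, ?_, ?_⟩,
    by rw [card_insert_of_notMem (by simp [h8]), card_erase_add_one h5], ?_, ?_⟩
  all_goals simp [hΓ.injective.eq_iff, *]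

theorem exists_isIndepSet_card_eq_add_two
    (hΓ : IsGammaConfiguration G w) (hs : IsReducedIndepSet G w s) :
    ∃ t : Finset V, G.IsIndepSet ↑t ∧ #t = #s + 2 := by
  by_cases hac : w 0 ∉ s ∧ w 5 ∉ s
  · exact hΓ.exists_isIndepSet_card_eq_add_two_of_notMem_a_c hs hac.1 hac.2
  by_cases hbd : w 3 ∉ s ∧ w 8 ∉ s
  · exact hΓ.exists_isIndepSet_card_eq_add_two_of_notMem_b_d hs hbd.1 hbd.2
  have hexchange : ∃ t, IsReducedIndepSet G w t ∧ #t = #s ∧ w 0 ∉ t ∧ w 5 ∉ t := by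
    by_cases h0 : w 0 ∈ s
    · exact hΓ.exists_exchange_a_for_b hs h0 (by have := hs.not_a_b; tauto)
    · have h5 : w 5 ∈ s := by tauto
      exact hΓ.exists_exchange_c_for_d hs h5 (by have := hs.not_c_d; tauto)
  obtain ⟨t, ht, hcard, ht0, ht5⟩ := hexchange
  rw [← hcard]
  exact hΓ.exists_isIndepSet_card_eq_add_two_of_notMem_a_c ht ht0 ht5

end IsGammaConfiguration

theorem IsGammaConfiguration.indepNum_gammaReduction_add_two [Finite V]
    (hΓ : IsGammaConfiguration G w) : (gammaReduction G w).indepNum + 2 = G.indepNum := by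
  classical
  obtain ⟨s, hs, hs_card⟩ := exists_isReducedIndepSet_card_eq_indepNum (G := G) hΓ.injective
  obtain ⟨t, ht, ht_card⟩ := hΓ.exists_isIndepSet_card_eq_add_two hs
  obtain ⟨m, hm⟩ := G.exists_isNIndepSet_indepNum
  obtain ⟨r, hr, hr_card⟩ :=
    hΓ.toIsInducedGamma.exists_isReducedIndepSet_card_add_two_ge hm.isIndepSet
  have ht_le := ht.card_le_indepNum
  have hr_le := hr.card_le_indepNum hΓ.injective
  have hm_card := hm.card_eq
  omega

end

theorem gamma_reduction_general {V : Type*} [Fintype V] (G : SimpleGraph V)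
    (w : Fin 9 → V) (hw : Function.Injective w)
    (hind : ∀ i j, G.Adj (w i) (w j) ↔ gammaAdj i j)
    (hinner : ∀ i : Fin 9, i ∈ ({1, 2, 6, 7} : Set (Fin 9)) →
      ∀ v, G.Adj (w i) v → ∃ j, v = w j)
    (hfbd : ∀ v, (∀ i, v ≠ w i) → (G.Adj (w 3) v ↔ G.Adj (w 8) v)) :
    indepNum (SimpleGraph.fromRel
      (fun a b : {v : V // v ≠ w 1 ∧ v ≠ w 2 ∧ v ≠ w 6 ∧ v ≠ w 7} =>
        G.Adj a.1 b.1 ∨ (a.1 = w 0 ∧ b.1 = w 3) ∨ (a.1 = w 5 ∧ b.1 = w 8)))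
    = indepNum G - 2 := by
  have hΓ : IsGammaConfiguration G w := ⟨⟨hw, hind⟩, hinner, hfbd⟩
  rw [indepNum_eq_indepNum, indepNum_eq_indepNum, ← hΓ.indepNum_gammaReduction_add_two]
  exact (Nat.add_sub_cancel _ _).symm

/-- Γ-reduction: deleting the four inner vertices `1,2,3,4` (indices `1,2,6,7`) of an
induced `Γ` and adding the edges `a–b` and `c–d` decreases the independence number
by exactly 2.  Any neighbour of `b` outside the configuration is the optional
vertex `f`, a common neighbour of `b` and `d`. -/
theorem gamma_reduction {V : Type*} [Fintype V] (G : SimpleGraph V)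
    [DecidableRel G.Adj] (hdeg : ∀ v, G.degree v ≤ 3)
    (w : Fin 9 → V) (hw : Function.Injective w)
    (hind : ∀ i j, G.Adj (w i) (w j) ↔ gammaAdj i j)
    (hinner : ∀ i : Fin 9, i ∈ ({1, 2, 6, 7} : Set (Fin 9)) →
      ∀ v, G.Adj (w i) v → ∃ j, v = w j)
    (hfbd : ∀ v, (∀ i, v ≠ w i) → (G.Adj (w 3) v ↔ G.Adj (w 8) v)) :
    indepNum (SimpleGraph.fromRel
      (fun a b : {v : V // v ≠ w 1 ∧ v ≠ w 2 ∧ v ≠ w 6 ∧ v ≠ w 7} =>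
        G.Adj a.1 b.1 ∨ (a.1 = w 0 ∧ b.1 = w 3) ∨ (a.1 = w 5 ∧ b.1 = w 8)))
    = indepNum G - 2 :=
  gamma_reduction_general G w hw hind hinner hfbd
end
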